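/- Theorem 2.1(a). Fix t ∈ ℝ. Suppose x ∈ 𝓑_{ε1,ε2}, the separation condition σ(t) ≥ 2α/(φ'_k(t) − φ'_{k−1}(t)) holds for all t and k = 1,…,K, and 2M(t)(τ0 + λ_0(t)) ≤ μ(t). Let ε̃1 satisfy M(t)(τ0 + λ_0(t)) ≤ ε̃1 ≤ μ(t) − M(t)(τ0 + λ_0(t)). Then the set 𝓖_t = {η : |Ṽ_x(t,η)| > ε̃1} is the disjoint union of exactly the K+1 sets 𝓖_{t,k} = {η ∈ 𝓖_t : |η − φ'_k(t)| < α/σ(t)}, 0 ≤ k ≤ K, and each 𝓖_{t,k} is non-empty (in particular φ'_k(t) ∈ 𝓖_{t,k}). -/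

import Mathlib

/-!
Seen through a window of width `σ(t)`, each component is, to first order, a pure tone at its
instantaneous frequency: freezing `A_k` at `t` costs `ε1 |τ| A_k(t)` and linearizing `φ_k` at `t`
costs `π ε2 τ² A_k(t)` (Taylor), so after integrating against the window, whose moments scale
like `σ^n I_n`, the STFT is within `M λ_0` of `Σ_k A_k e^{2πiφ_k} ĝ(σ(η − φ'_k))`.
The separation condition puts distinct instantaneous frequencies at least `2α/σ` apart. Away from
every band `|η − φ'_k| < α/σ` each term of the model is at most `A_k τ0`, so `|Ṽ_x| ≤ M(τ0 + λ_0)`;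
at `η = φ'_k` the `k`-th term has modulus `A_k` and the others at most `A_l τ0`, so
`|Ṽ_x| > μ − M(τ0 + λ_0)`. The admissible range of `ε̃1` lies between these two bounds.
-/

open MeasureTheory Real

noncomputable section

/-- The adaptive short-time Fourier transform with time-varying window width `σ`. -/
def aSTFT (x : ℝ → ℂ) (g : ℝ → ℝ) (σ : ℝ → ℝ) (t η : ℝ) : ℂ :=
  ∫ τ : ℝ, x (t + τ) * (((σ t)⁻¹ * g (τ / σ t) : ℝ) : ℂ) *
    Complex.exp (-(2 * (π : ℂ) * η * τ) * Complex.I)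

/-- The Fourier transform `ĝ` of the window `g`. -/
def hatg (g : ℝ → ℝ) (ξ : ℝ) : ℂ :=
  ∫ τ : ℝ, (g τ : ℂ) * Complex.exp (-(2 * (π : ℂ) * ξ * τ) * Complex.I)

/-- The absolute moments `I_n = ∫ |τ^n g(τ)| dτ` of the window. -/
def momentI (g : ℝ → ℝ) (n : ℕ) : ℝ := ∫ τ : ℝ, |τ| ^ n * |g τ|

/-- The `k`-th component `x_k(s) = A_k(s) e^{2πi φ_k(s)}`. -/
def xcomp (A φ : ℕ → ℝ → ℝ) (k : ℕ) (s : ℝ) : ℂ :=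
  (A k s : ℂ) * Complex.exp ((2 * (π : ℂ) * φ k s) * Complex.I)

/-- `M(t) = Σ_{k=0}^K A_k(t)`. -/
def Msum (K : ℕ) (A : ℕ → ℝ → ℝ) (t : ℝ) : ℝ := ∑ k ∈ Finset.range (K + 1), A k t

/-- `μ(t) = min_{0 ≤ k ≤ K} A_k(t)`. -/
def muMin (K : ℕ) (A : ℕ → ℝ → ℝ) (t : ℝ) : ℝ :=
  (Finset.range (K + 1)).inf' (by simp) fun k => A k t

/-- `λ_0(t) = ε1 I_1 σ(t) + π ε2 I_2 σ(t)²`. -/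
def lam0 (g : ℝ → ℝ) (σ : ℝ → ℝ) (ε1 ε2 t : ℝ) : ℝ :=
  ε1 * momentI g 1 * σ t + π * ε2 * momentI g 2 * σ t ^ 2

/-- `err_ℓ(t) = M(t)λ_0(t) + Σ_{k≠ℓ} A_k(t) |ĝ(α(2|ℓ−k|−1))|`. -/
def errl (K : ℕ) (A : ℕ → ℝ → ℝ) (g : ℝ → ℝ) (σ : ℝ → ℝ) (α ε1 ε2 : ℝ)
    (l : ℕ) (t : ℝ) : ℝ :=
  Msum K A t * lam0 g σ ε1 ε2 t +
    ∑ k ∈ (Finset.range (K + 1)).erase l,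
      A k t * ‖hatg g (α * (2 * |(l : ℝ) - (k : ℝ)| - 1))‖

/-- `𝓖_t = {η : |Ṽ_x(t,η)| > ε̃1}`. -/
def Gt (x : ℝ → ℂ) (g : ℝ → ℝ) (σ : ℝ → ℝ) (t eps : ℝ) : Set ℝ :=
  {η | eps < ‖aSTFT x g σ t η‖}

/-- `𝓖_{t,k} = {η ∈ 𝓖_t : |η − φ'_k(t)| < α/σ(t)}`. -/
def Gtk (x : ℝ → ℂ) (g : ℝ → ℝ) (σ : ℝ → ℝ) (φ : ℕ → ℝ → ℝ) (α t eps : ℝ)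
    (k : ℕ) : Set ℝ :=
  {η | η ∈ Gt x g σ t eps ∧ |η - deriv (φ k) t| < α / σ t}

theorem norm_ofReal_mul_exp_sub_le (a b θ ψ : ℝ) :
    ‖(a : ℂ) * Complex.exp (θ * Complex.I) - (b : ℂ) * Complex.exp (ψ * Complex.I)‖ ≤
      |a - b| + |b| * |θ - ψ| := by
  have hrot : Complex.exp (θ * Complex.I) - Complex.exp (ψ * Complex.I) =
      Complex.exp (ψ * Complex.I) * (Complex.exp (Complex.I * ((θ - ψ : ℝ) : ℂ)) - 1) := by
    rw [mul_sub, ← Complex.exp_add]; push_cast; ring_nf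
  have hsplit : (a : ℂ) * Complex.exp (θ * Complex.I) - (b : ℂ) * Complex.exp (ψ * Complex.I) =
      ((a - b : ℝ) : ℂ) * Complex.exp (θ * Complex.I) +
        (b : ℂ) * (Complex.exp (θ * Complex.I) - Complex.exp (ψ * Complex.I)) := by
    push_cast; ring
  rw [hsplit, hrot]
  refine (norm_add_le _ _).trans ?_
  simp only [norm_mul, Complex.norm_real, Real.norm_eq_abs, Complex.norm_exp_ofReal_mul_I, mul_one,
    one_mul]
  gcongr
  simpa using Real.norm_exp_I_mul_ofReal_sub_one_le (x := θ - ψ)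

theorem norm_ofReal_mul_exp_mul (a θ : ℝ) (z : ℂ) :
    ‖(a : ℂ) * Complex.exp ((2 * (π : ℂ) * θ) * Complex.I) * z‖ = |a| * ‖z‖ := by
  have h := Complex.norm_exp_ofReal_mul_I (2 * π * θ)
  push_cast at h
  rw [norm_mul, norm_mul, h, Complex.norm_real, Real.norm_eq_abs, mul_one]

theorem abs_sub_sub_deriv_mul_le {f : ℝ → ℝ} {C : ℝ} (hf : ContDiff ℝ 2 f)
    (hf'' : ∀ s, |deriv (deriv f) s| ≤ C) (t τ : ℝ) :
    |f (t + τ) - f t - deriv f t * τ| ≤ C * τ ^ 2 / 2 := by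
  have hd : Differentiable ℝ f := hf.differentiable (by norm_num)
  have hd' : Differentiable ℝ (deriv f) :=
    (contDiff_succ_iff_deriv (n := 1).mp hf).2.2.differentiable (by norm_num)
  have hlip : ∀ s, |deriv f s - deriv f t| ≤ C * |s - t| := fun s => by
    simpa using Convex.norm_image_sub_le_of_norm_deriv_le (fun x _ => hd' x) (fun x _ => hf'' x)
      convex_univ (Set.mem_univ t) (Set.mem_univ s)
  -- rescale to `u ∈ [0, 1]` so that both signs of `τ` are handled at once
  set F : ℝ → ℝ := fun u => f (t + u * τ) - f t - deriv f t * (u * τ)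
  have hF : ∀ u, HasDerivAt F (τ * (deriv f (t + u * τ) - deriv f t)) u := fun u => by
    have hin : HasDerivAt (fun u : ℝ => t + u * τ) τ u := by
      simpa using ((hasDerivAt_id u).mul_const τ).const_add t
    exact ((((hd _).hasDerivAt.comp u hin).sub_const (f t)).sub
      (((hasDerivAt_id u).mul_const τ).const_mul (deriv f t))).congr_deriv (by simp; ring)
  have hB : ∀ u, HasDerivAt (fun u : ℝ => C * τ ^ 2 * u ^ 2 / 2) (C * τ ^ 2 * u) u := fun u =>
    (((hasDerivAt_pow 2 u).const_mul (C * τ ^ 2)).div_const 2).congr_deriv (by ring)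
  have key := image_norm_le_of_norm_deriv_right_le_deriv_boundary (a := 0) (b := 1) (f := F)
    (fun u _ => (hF u).continuousAt.continuousWithinAt) (fun u _ => (hF u).hasDerivWithinAt)
    (by simp [F]) hB (fun u hu => by
      rw [Real.norm_eq_abs, abs_mul]
      calc |τ| * |deriv f (t + u * τ) - deriv f t| ≤ |τ| * (C * |u * τ|) := by
            gcongr; simpa using hlip (t + u * τ)
        _ = C * τ ^ 2 * u := by rw [abs_mul, abs_of_nonneg hu.1, ← sq_abs τ]; ring)
    (x := 1) (by simp)
  simpa [F] using key

theorem le_abs_sub_of_le_sub_pred {f : ℕ → ℝ} {d : ℝ} {K : ℕ} (hd : 0 ≤ d)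
    (hstep : ∀ k, 1 ≤ k → k ≤ K → d ≤ f k - f (k - 1)) {k l : ℕ} (hk : k ≤ K) (hl : l ≤ K)
    (hkl : k ≠ l) : d ≤ |f k - f l| := by
  have hchain : ∀ k l, k < l → l ≤ K → f k + d ≤ f l := by
    intro k l hkl hl
    induction l with
    | zero => omega
    | succ n ih =>
      have h := hstep (n + 1) (by omega) hl
      rw [Nat.add_sub_cancel] at h
      rcases Nat.lt_succ_iff_lt_or_eq.mp hkl with hkn | rfl
      · linarith [ih hkn (by omega)]
      · linarith
  rcases lt_or_gt_of_ne hkl with h | h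
  · linarith [hchain k l h hl, neg_abs_le (f k - f l)]
  · linarith [hchain l k h hk, le_abs_self (f k - f l)]

theorem hatg_zero {g : ℝ → ℝ} (hg : ∫ τ, g τ = 1) : hatg g 0 = 1 := by
  simp [hatg, integral_complex_ofReal, hg]

theorem norm_hatg_le_of_le_abs {g : ℝ → ℝ} {α : ℝ} (hα : 0 ≤ α)
    (heven : ∀ ξ, ‖hatg g (-ξ)‖ = ‖hatg g ξ‖)
    (hdec : ∀ ξ1 ξ2, 0 ≤ ξ1 → ξ1 ≤ ξ2 → ‖hatg g ξ2‖ ≤ ‖hatg g ξ1‖) {y : ℝ} (hy : α ≤ |y|) :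
    ‖hatg g y‖ ≤ ‖hatg g α‖ := by
  rcases le_or_gt 0 y with h | h
  · exact hdec α y hα (by rwa [abs_of_nonneg h] at hy)
  · calc ‖hatg g y‖ = ‖hatg g (-y)‖ := (heven y).symm
      _ ≤ ‖hatg g α‖ := hdec α (-y) hα (by rwa [abs_of_neg h] at hy)

theorem integral_dilation_mul_exp (g : ℝ → ℝ) {s : ℝ} (hs : 0 < s) (ξ : ℝ) :
    ∫ τ, ((s⁻¹ * g (τ / s) : ℝ) : ℂ) * Complex.exp (-(2 * (π : ℂ) * ξ * τ) * Complex.I) =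
      hatg g (s * ξ) := by
  have h := Measure.integral_comp_div
    (fun u : ℝ => (g u : ℂ) * Complex.exp (-(2 * (π : ℂ) * (s * ξ : ℝ) * u) * Complex.I)) s
  have hs' : (s : ℂ) ≠ 0 := by exact_mod_cast hs.ne'
  simp only [abs_of_pos hs, Complex.real_smul] at h
  calc _ = (s : ℂ)⁻¹ * ∫ τ : ℝ, (g (τ / s) : ℂ) *
        Complex.exp (-(2 * (π : ℂ) * (s * ξ : ℝ) * (τ / s : ℝ)) * Complex.I) := by
        rw [← integral_const_mul]
        congr 1 with τ
        push_cast
        field_simp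
    _ = hatg g (s * ξ) := by rw [h, inv_mul_cancel_left₀ hs']; rfl

theorem integrable_abs_pow_mul_dilation {g : ℝ → ℝ} {n : ℕ} (hg : Integrable fun τ => τ ^ n * g τ)
    {s : ℝ} (hs : 0 < s) : Integrable fun τ => |τ| ^ n * (s⁻¹ * |g (τ / s)|) := by
  refine ((hg.norm.comp_div hs.ne').const_mul (s ^ n * s⁻¹)).congr (ae_of_all _ fun τ => ?_)
  simp only [norm_mul, Real.norm_eq_abs, abs_pow, abs_div, abs_of_pos hs, div_pow]
  field_simp

theorem integral_abs_pow_mul_dilation (g : ℝ → ℝ) (n : ℕ) {s : ℝ} (hs : 0 < s) :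
    ∫ τ, |τ| ^ n * (s⁻¹ * |g (τ / s)|) = s ^ n * momentI g n := by
  have h := Measure.integral_comp_div (fun u : ℝ => |u| ^ n * |g u|) s
  rw [abs_of_pos hs, smul_eq_mul] at h
  calc _ = s ^ n * s⁻¹ * ∫ τ : ℝ, |τ / s| ^ n * |g (τ / s)| := by
        rw [← integral_const_mul]
        congr 1 with τ
        rw [abs_div, abs_of_pos hs, div_pow]
        field_simp
    _ = s ^ n * momentI g n := by rw [h, momentI]; field_simp

theorem norm_xcomp_sub_chirp_le {A φ : ℕ → ℝ → ℝ} {k : ℕ} {ε1 ε2 t τ : ℝ}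
    (hA : |A k (t + τ) - A k t| ≤ ε1 * |τ| * A k t) (hApos : 0 < A k t)
    (hφ : ContDiff ℝ 2 (φ k)) (hφ'' : ∀ s, |deriv (deriv (φ k)) s| ≤ ε2) :
    ‖xcomp A φ k (t + τ) -
        (A k t : ℂ) * Complex.exp (2 * π * (φ k t + deriv (φ k) t * τ) * Complex.I)‖ ≤
      A k t * (ε1 * |τ| + π * ε2 * τ ^ 2) := by
  have hphase : |2 * π * φ k (t + τ) - 2 * π * (φ k t + deriv (φ k) t * τ)| ≤ π * ε2 * τ ^ 2 := by
    rw [← mul_sub, abs_mul, abs_of_pos (by positivity), ← sub_sub]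
    nlinarith [abs_sub_sub_deriv_mul_le hφ hφ'' t τ, pi_pos]
  have h := norm_ofReal_mul_exp_sub_le (A k (t + τ)) (A k t) (2 * π * φ k (t + τ))
    (2 * π * (φ k t + deriv (φ k) t * τ))
  push_cast at h
  rw [abs_of_pos hApos] at h
  calc _ ≤ _ := h
    _ ≤ ε1 * |τ| * A k t + A k t * (π * ε2 * τ ^ 2) := by gcongr
    _ = _ := by ring

theorem integrable_quadratic_mul_dilation {g : ℝ → ℝ} (hg1 : Integrable fun τ => τ * g τ)
    (hg2 : Integrable fun τ => τ ^ 2 * g τ) {s : ℝ} (hs : 0 < s) (a b : ℝ) :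
    Integrable fun τ => (a * |τ| + b * τ ^ 2) * (s⁻¹ * |g (τ / s)|) :=
  ((integrable_abs_pow_mul_dilation (n := 1) (by simpa using hg1) hs).const_mul a |>.add
    ((integrable_abs_pow_mul_dilation hg2 hs).const_mul b)).congr
    (ae_of_all _ fun τ => by simp only [Pi.add_apply, pow_one, sq_abs]; ring)

theorem integral_quadratic_mul_dilation {g : ℝ → ℝ} (hg1 : Integrable fun τ => τ * g τ)
    (hg2 : Integrable fun τ => τ ^ 2 * g τ) {s : ℝ} (hs : 0 < s) (a b : ℝ) :
    ∫ τ, (a * |τ| + b * τ ^ 2) * (s⁻¹ * |g (τ / s)|) =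
      a * momentI g 1 * s + b * momentI g 2 * s ^ 2 := by
  calc _ = ∫ τ, a * (|τ| ^ 1 * (s⁻¹ * |g (τ / s)|)) + b * (|τ| ^ 2 * (s⁻¹ * |g (τ / s)|)) := by
        congr 1 with τ; rw [pow_one, sq_abs]; ring
    _ = a * (s ^ 1 * momentI g 1) + b * (s ^ 2 * momentI g 2) := by
        rw [integral_add
          ((integrable_abs_pow_mul_dilation (by simpa using hg1) hs).const_mul a)
          ((integrable_abs_pow_mul_dilation hg2 hs).const_mul b),
          integral_const_mul, integral_const_mul, integral_abs_pow_mul_dilation g 1 hs,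
          integral_abs_pow_mul_dilation g 2 hs]
    _ = _ := by ring

theorem integrable_xcomp_window_and_norm_integral_sub_le {A φ : ℕ → ℝ → ℝ} {k : ℕ}
    {g σ : ℝ → ℝ} {ε1 ε2 t : ℝ} (hAc : Continuous (A k))
    (hA : ∀ τ, |A k (t + τ) - A k t| ≤ ε1 * |τ| * A k t) (hApos : 0 < A k t)
    (hφ : ContDiff ℝ 2 (φ k)) (hφ'' : ∀ s, |deriv (deriv (φ k)) s| ≤ ε2)
    (hg : Integrable g) (hg1 : Integrable fun τ => τ * g τ)
    (hg2 : Integrable fun τ => τ ^ 2 * g τ) (hσ : 0 < σ t) (η : ℝ) :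
    Integrable (fun τ => xcomp A φ k (t + τ) * (((σ t)⁻¹ * g (τ / σ t) : ℝ) : ℂ) *
        Complex.exp (-(2 * (π : ℂ) * η * τ) * Complex.I)) ∧
      ‖(∫ τ, xcomp A φ k (t + τ) * (((σ t)⁻¹ * g (τ / σ t) : ℝ) : ℂ) *
          Complex.exp (-(2 * (π : ℂ) * η * τ) * Complex.I)) -
        (A k t : ℂ) * Complex.exp ((2 * (π : ℂ) * φ k t) * Complex.I) *
          hatg g (σ t * (η - deriv (φ k) t))‖ ≤ A k t * lam0 g σ ε1 ε2 t := by
  set s := σ t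
  set w : ℝ → ℂ := fun τ => ((s⁻¹ * g (τ / s) : ℝ) : ℂ)
  set e : ℝ → ℝ → ℂ := fun ξ τ => Complex.exp (-(2 * (π : ℂ) * ξ * τ) * Complex.I)
  set ξ := η - deriv (φ k) t
  set F : ℝ → ℂ := fun τ => xcomp A φ k (t + τ) * w τ * e η τ
  set G : ℝ → ℂ := fun τ =>
    (A k t : ℂ) * Complex.exp (2 * π * (φ k t + deriv (φ k) t * τ) * Complex.I) * w τ * e η τ
  set D : ℝ → ℝ := fun τ => (A k t * ε1 * |τ| + A k t * (π * ε2) * τ ^ 2) * (s⁻¹ * |g (τ / s)|)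
  have hnorm_e : ∀ ξ τ, ‖e ξ τ‖ = 1 := fun ξ τ => by
    simpa [e, neg_mul, mul_assoc] using Complex.norm_exp_ofReal_mul_I (-(2 * π * ξ * τ))
  have hw : Integrable w := (hg.comp_div hσ.ne').const_mul s⁻¹ |>.ofReal
  -- linearizing the phase at `t` turns the component into a modulated copy of the window
  have hG : G = fun τ => (A k t : ℂ) * Complex.exp ((2 * (π : ℂ) * φ k t) * Complex.I) *
      (w τ * e ξ τ) := funext fun τ => by
    have hphase : Complex.exp (2 * π * (φ k t + deriv (φ k) t * τ) * Complex.I) * e η τ =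
        Complex.exp ((2 * (π : ℂ) * φ k t) * Complex.I) * e ξ τ := by
      simp only [e, ξ, ← Complex.exp_add]
      push_cast
      ring_nf
    linear_combination (A k t : ℂ) * w τ * hphase
  have hGint : Integrable G :=
    hG ▸ (hw.mul_bdd (by fun_prop) (ae_of_all _ fun τ => (hnorm_e ξ τ).le)).const_mul _
  have hD : Integrable D := integrable_quadratic_mul_dilation hg1 hg2 hσ _ _
  have hFG : ∀ τ, ‖F τ - G τ‖ ≤ D τ := fun τ => by
    calc ‖F τ - G τ‖ = ‖xcomp A φ k (t + τ) - (A k t : ℂ) *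
          Complex.exp (2 * π * (φ k t + deriv (φ k) t * τ) * Complex.I)‖ * ‖w τ‖ * ‖e η τ‖ := by
          rw [← norm_mul, ← norm_mul, sub_mul, sub_mul]
      _ ≤ A k t * (ε1 * |τ| + π * ε2 * τ ^ 2) * (s⁻¹ * |g (τ / s)|) * 1 := by
          have hnorm_w : ‖w τ‖ = s⁻¹ * |g (τ / s)| := by simp [w, abs_of_pos hσ]
          rw [hnorm_e, hnorm_w]
          gcongr
          exact norm_xcomp_sub_chirp_le (hA τ) hApos hφ hφ''
      _ = D τ := by ring
  have hxc : Continuous fun τ => xcomp A φ k (t + τ) := by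
    have := hφ.continuous
    unfold xcomp; fun_prop
  have hF : Integrable F := integrable_of_norm_sub_le
    ((hxc.aestronglyMeasurable.mul hw.aestronglyMeasurable).mul (by fun_prop)) hGint hD
    (ae_of_all _ fun τ => norm_sub_rev (G τ) (F τ) ▸ hFG τ)
  refine ⟨hF, ?_⟩
  calc _ = ‖∫ τ, F τ - G τ‖ := by
        rw [integral_sub hF hGint, hG, integral_const_mul, integral_dilation_mul_exp g hσ ξ]
    _ ≤ ∫ τ, D τ := norm_integral_le_of_norm_le hD (ae_of_all _ hFG)
    _ = A k t * lam0 g σ ε1 ε2 t := by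
        rw [integral_quadratic_mul_dilation hg1 hg2 hσ, lam0]; ring

/-- The stationary-phase approximation of `aSTFT` for the signal `∑ k ∈ s, xcomp A φ k`. -/
def modelSTFT (s : Finset ℕ) (A φ : ℕ → ℝ → ℝ) (g σ : ℝ → ℝ) (t η : ℝ) : ℂ :=
  ∑ k ∈ s, (A k t : ℂ) * Complex.exp ((2 * (π : ℂ) * φ k t) * Complex.I) *
    hatg g (σ t * (η - deriv (φ k) t))

theorem norm_aSTFT_sub_modelSTFT_le {K : ℕ} {A φ : ℕ → ℝ → ℝ} {x : ℝ → ℂ} {g σ : ℝ → ℝ}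
    {ε1 ε2 t : ℝ} (hx : ∀ s, x s = ∑ k ∈ Finset.range (K + 1), xcomp A φ k s)
    (hAc : ∀ k ≤ K, Continuous (A k))
    (hA : ∀ k ≤ K, ∀ τ, |A k (t + τ) - A k t| ≤ ε1 * |τ| * A k t)
    (hApos : ∀ k ≤ K, 0 < A k t) (hφ : ∀ k ≤ K, ContDiff ℝ 2 (φ k))
    (hφ'' : ∀ k ≤ K, ∀ s, |deriv (deriv (φ k)) s| ≤ ε2)
    (hg : Integrable g) (hg1 : Integrable fun τ => τ * g τ)
    (hg2 : Integrable fun τ => τ ^ 2 * g τ) (hσ : 0 < σ t) (η : ℝ) :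
    ‖aSTFT x g σ t η - modelSTFT (Finset.range (K + 1)) A φ g σ t η‖ ≤
      Msum K A t * lam0 g σ ε1 ε2 t := by
  have hcomp : ∀ k ∈ Finset.range (K + 1), _ := fun k hk =>
    have hk : k ≤ K := Finset.mem_range_succ_iff.mp hk
    integrable_xcomp_window_and_norm_integral_sub_le (hAc k hk) (hA k hk) (hApos k hk) (hφ k hk)
      (hφ'' k hk) hg hg1 hg2 hσ η
  have hsplit : aSTFT x g σ t η = ∑ k ∈ Finset.range (K + 1),
      ∫ τ, xcomp A φ k (t + τ) * (((σ t)⁻¹ * g (τ / σ t) : ℝ) : ℂ) *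
        Complex.exp (-(2 * (π : ℂ) * η * τ) * Complex.I) := by
    rw [aSTFT, ← integral_finsetSum _ fun k hk => (hcomp k hk).1]
    simp only [hx, Finset.sum_mul]
  rw [hsplit, modelSTFT, ← Finset.sum_sub_distrib, Msum, Finset.sum_mul]
  exact (norm_sum_le _ _).trans (Finset.sum_le_sum fun k hk => (hcomp k hk).2)

theorem norm_modelSTFT_le {s : Finset ℕ} {A φ : ℕ → ℝ → ℝ} {g σ : ℝ → ℝ} {t η α τ0 : ℝ}
    (hA : ∀ k ∈ s, 0 ≤ A k t) (hσ : 0 < σ t) (hĝ : ∀ y, α ≤ |y| → ‖hatg g y‖ ≤ τ0)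
    (hfar : ∀ k ∈ s, α / σ t ≤ |η - deriv (φ k) t|) :
    ‖modelSTFT s A φ g σ t η‖ ≤ (∑ k ∈ s, A k t) * τ0 := by
  rw [modelSTFT, Finset.sum_mul]
  refine (norm_sum_le _ _).trans (Finset.sum_le_sum fun k hk => ?_)
  rw [norm_ofReal_mul_exp_mul, abs_of_nonneg (hA k hk)]
  refine mul_le_mul_of_nonneg_left (hĝ _ ?_) (hA k hk)
  rw [abs_mul, abs_of_pos hσ, ← div_le_iff₀' hσ]
  exact hfar k hk

theorem le_norm_modelSTFT_deriv {s : Finset ℕ} {A φ : ℕ → ℝ → ℝ} {g σ : ℝ → ℝ} {t α τ0 : ℝ}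
    {k : ℕ} (hk : k ∈ s) (hA : ∀ l ∈ s, 0 ≤ A l t) (hσ : 0 < σ t)
    (hĝ : ∀ y, α ≤ |y| → ‖hatg g y‖ ≤ τ0) (hĝ0 : ‖hatg g 0‖ = 1)
    (hsep : ∀ l ∈ s, l ≠ k → α / σ t ≤ |deriv (φ k) t - deriv (φ l) t|) :
    A k t - (∑ l ∈ s, A l t - A k t) * τ0 ≤ ‖modelSTFT s A φ g σ t (deriv (φ k) t)‖ := by
  rw [← Finset.sum_erase_eq_sub hk]
  have hrest := norm_modelSTFT_le (s := s.erase k) (φ := φ) (η := deriv (φ k) t)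
    (fun l hl => hA l (Finset.mem_of_mem_erase hl)) hσ hĝ
    (fun l hl => hsep l (Finset.mem_of_mem_erase hl) (Finset.ne_of_mem_erase hl))
  have hpeak : ‖(A k t : ℂ) * Complex.exp ((2 * (π : ℂ) * φ k t) * Complex.I) *
      hatg g (σ t * (deriv (φ k) t - deriv (φ k) t))‖ = A k t := by
    rw [norm_ofReal_mul_exp_mul, sub_self, mul_zero, hĝ0, mul_one, abs_of_nonneg (hA k hk)]
  rw [modelSTFT] at hrest ⊢
  rw [← Finset.add_sum_erase s _ hk]
  refine le_trans ?_ (norm_sub_le_norm_add _ _)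
  rw [hpeak]
  linarith

section LevelSets

variable {x : ℝ → ℂ} {g σ : ℝ → ℝ} {φ : ℕ → ℝ → ℝ} {α t eps : ℝ}

theorem Gt_eq_iUnion_Gtk {s : Finset ℕ} {m : ℝ → ℂ} {B E : ℝ}
    (hV : ∀ η, ‖aSTFT x g σ t η - m η‖ ≤ E)
    (htail : ∀ η, (∀ k ∈ s, α / σ t ≤ |η - deriv (φ k) t|) → ‖m η‖ ≤ B) (heps : B + E ≤ eps) :
    Gt x g σ t eps = ⋃ k ∈ s, Gtk x g σ φ α t eps k := by
  ext η
  simp only [Set.mem_iUnion, Gtk, Set.mem_ofPred_eq, exists_prop]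
  refine ⟨fun hη => ?_, fun ⟨_, _, hη, _⟩ => hη⟩
  by_contra! hfar
  have hm := htail η fun k hk => hfar k hk hη
  have hη' : eps < ‖aSTFT x g σ t η‖ := hη
  linarith [norm_le_norm_add_norm_sub' (aSTFT x g σ t η) (m η), hV η]

theorem disjoint_Gtk {k l : ℕ}
    (hsep : 2 * α / σ t ≤ |deriv (φ k) t - deriv (φ l) t|) :
    Disjoint (Gtk x g σ φ α t eps k) (Gtk x g σ φ α t eps l) := by
  refine Set.disjoint_left.mpr fun η ⟨_, hk⟩ ⟨_, hl⟩ => ?_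
  have := abs_sub_le (deriv (φ k) t) η (deriv (φ l) t)
  rw [abs_sub_comm (deriv (φ k) t) η] at this
  linarith [show 2 * α / σ t = α / σ t + α / σ t by ring]

theorem mem_Gt_of_norm_sub_le {η B E : ℝ} {m : ℂ} (hV : ‖aSTFT x g σ t η - m‖ ≤ E)
    (hm : B ≤ ‖m‖) (heps : eps < B - E) : η ∈ Gt x g σ t eps := by
  show eps < ‖aSTFT x g σ t η‖
  linarith [norm_sub_norm_le m (aSTFT x g σ t η), norm_sub_rev (aSTFT x g σ t η) m]

end LevelSets

theorem thm2_1a_general (K : ℕ) (A φ : ℕ → ℝ → ℝ) (ε1 ε2 : ℝ) (x : ℝ → ℂ)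
    (g : ℝ → ℝ) (σ : ℝ → ℝ) (τ0 α t epst : ℝ)
    (hε2 : 0 < ε2)
    (hAreg : ∀ k ≤ K, ContDiff ℝ 1 (A k))
    (hφreg : ∀ k ≤ K, ContDiff ℝ 2 (φ k))
    (hφ0 : ∀ s, φ 0 s = 0)
    (hApos : ∀ k ≤ K, ∀ s, 0 < A k s)
    (hφ'pos : ∀ k, 1 ≤ k → k ≤ K → ∃ c > 0, ∀ s, c ≤ deriv (φ k) s)
    (hfreq : ∃ d > 0, ∀ k, 2 ≤ k → k ≤ K → ∀ s, d ≤ deriv (φ k) s - deriv (φ (k - 1)) s)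
    (hAlip : ∀ k ≤ K, ∀ s τ, |A k (s + τ) - A k s| ≤ ε1 * |τ| * A k s)
    (hφ'' : ∀ k, 1 ≤ k → k ≤ K → ∀ s, |deriv (deriv (φ k)) s| ≤ ε2)
    (hx : ∀ s, x s = ∑ k ∈ Finset.range (K + 1), xcomp A φ k s)
    (hgint : Integrable g)
    (hgI1 : Integrable fun τ : ℝ => τ * g τ)
    (hgI2 : Integrable fun τ : ℝ => τ ^ 2 * g τ)
    (hgnorm : (∫ τ : ℝ, g τ) = 1)
    (hgeven : ∀ ξ, ‖hatg g (-ξ)‖ = ‖hatg g ξ‖)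
    (hgdec : ∀ ξ1 ξ2, 0 ≤ ξ1 → ξ1 ≤ ξ2 → ‖hatg g ξ2‖ ≤ ‖hatg g ξ1‖)
    (hτ0 : 0 < τ0)
    (hα : 0 < α) (hgα : ‖hatg g α‖ = τ0)
    (hσ : ∀ s, 0 < σ s)
    (hsep : ∀ s, ∀ k, 1 ≤ k → k ≤ K →
      2 * α / (deriv (φ k) s - deriv (φ (k - 1)) s) ≤ σ s)
    (heps1 : Msum K A t * (τ0 + lam0 g σ ε1 ε2 t) ≤ epst)
    (heps2 : epst ≤ muMin K A t - Msum K A t * (τ0 + lam0 g σ ε1 ε2 t))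
    :
    (Gt x g σ t epst = ⋃ k ∈ Finset.range (K + 1), Gtk x g σ φ α t epst k) ∧
    (∀ k ≤ K, ∀ l ≤ K, k ≠ l →
      Disjoint (Gtk x g σ φ α t epst k) (Gtk x g σ φ α t epst l)) ∧
    (∀ k ≤ K, deriv (φ k) t ∈ Gtk x g σ φ α t epst k) := by
  have hσt := hσ t
  have hφ0' : φ 0 = 0 := funext hφ0
  have hgap : ∀ k, 1 ≤ k → k ≤ K → 0 < deriv (φ k) t - deriv (φ (k - 1)) t := by
    intro k hk hkK
    rcases hk.eq_or_lt with rfl | hk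
    · obtain ⟨c, hc, hφ'⟩ := hφ'pos 1 le_rfl hkK
      simpa [hφ0'] using hc.trans_le (hφ' t)
    · obtain ⟨d, hd, hfreq⟩ := hfreq
      exact hd.trans_le (hfreq k hk hkK t)
  have hsep' : ∀ k ≤ K, ∀ l ≤ K, k ≠ l → 2 * α / σ t ≤ |deriv (φ k) t - deriv (φ l) t| :=
    fun k hk l hl => le_abs_sub_of_le_sub_pred (f := fun k => deriv (φ k) t) (by positivity)
      (fun k h1 hkK => (div_le_comm₀ (hgap k h1 hkK) hσt).mp (hsep t k h1 hkK)) hk hl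
  have hφ2 : ∀ k ≤ K, ∀ s, |deriv (deriv (φ k)) s| ≤ ε2 := fun k hk => by
    rcases k.eq_zero_or_pos with rfl | hk1
    exacts [by simp [hφ0', hε2.le], hφ'' k hk1 hk]
  have hV := norm_aSTFT_sub_modelSTFT_le hx (fun k hk => (hAreg k hk).continuous)
    (fun k hk => hAlip k hk t) (fun k hk => hApos k hk t) hφreg hφ2 hgint hgI1 hgI2 hσt
  have hĝ : ∀ y, α ≤ |y| → ‖hatg g y‖ ≤ τ0 :=
    fun y hy => hgα ▸ norm_hatg_le_of_le_abs hα.le hgeven hgdec hy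
  have hA : ∀ k ∈ Finset.range (K + 1), 0 ≤ A k t :=
    fun k hk => (hApos k (Finset.mem_range_succ_iff.mp hk) t).le
  refine ⟨Gt_eq_iUnion_Gtk hV (fun η hfar => norm_modelSTFT_le hA hσt hĝ hfar)
    (by rw [Msum] at heps1 ⊢; linarith), fun k hk l hl hkl => disjoint_Gtk (hsep' k hk l hl hkl),
    fun k hk => ⟨mem_Gt_of_norm_sub_le (hV _) (le_norm_modelSTFT_deriv
      (Finset.mem_range_succ_iff.mpr hk) hA hσt hĝ (by simp [hatg_zero hgnorm])
      fun l hl hlk => ?_) ?_, by simpa using div_pos hα hσt⟩⟩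
  · exact (div_le_div_of_nonneg_right (by linarith) hσt.le).trans
      (hsep' k hk l (Finset.mem_range_succ_iff.mp hl) hlk.symm)
  · have hμ : muMin K A t ≤ A k t := Finset.inf'_le _ (Finset.mem_range_succ_iff.mpr hk)
    unfold Msum at heps2 ⊢
    nlinarith [mul_pos (hApos k hk t) hτ0]

theorem thm2_1a (K : ℕ) (A φ : ℕ → ℝ → ℝ) (ε1 ε2 : ℝ) (x : ℝ → ℂ)
    (g : ℝ → ℝ) (σ : ℝ → ℝ) (τ0 α t epst : ℝ)
    (hε1 : 0 < ε1) (hε2 : 0 < ε2)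
    (hAreg : ∀ k ≤ K, ContDiff ℝ 1 (A k))
    (hAbdd : ∀ k ≤ K, ∃ C, ∀ s, |A k s| ≤ C)
    (hφreg : ∀ k ≤ K, ContDiff ℝ 2 (φ k))
    (hφ0 : ∀ s, φ 0 s = 0)
    (hApos : ∀ k ≤ K, ∀ s, 0 < A k s)
    (hφ'pos : ∀ k, 1 ≤ k → k ≤ K → ∃ c > 0, ∀ s, c ≤ deriv (φ k) s)
    (hφ'bdd : ∀ k, 1 ≤ k → k ≤ K → ∃ C, ∀ s, deriv (φ k) s ≤ C)
    (hfreq : ∃ d > 0, ∀ k, 2 ≤ k → k ≤ K → ∀ s, d ≤ deriv (φ k) s - deriv (φ (k - 1)) s)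
    (hAlip : ∀ k ≤ K, ∀ s τ, |A k (s + τ) - A k s| ≤ ε1 * |τ| * A k s)
    (hφ'' : ∀ k, 1 ≤ k → k ≤ K → ∀ s, |deriv (deriv (φ k)) s| ≤ ε2)
    (hx : ∀ s, x s = ∑ k ∈ Finset.range (K + 1), xcomp A φ k s)
    (hgint : Integrable g)
    (hgL2 : MemLp g 2 (volume : Measure ℝ))
    (hgI1 : Integrable fun τ : ℝ => τ * g τ)
    (hgI2 : Integrable fun τ : ℝ => τ ^ 2 * g τ)
    (hgnorm : (∫ τ : ℝ, g τ) = 1)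
    (hgeven : ∀ ξ, ‖hatg g (-ξ)‖ = ‖hatg g ξ‖)
    (hgdec : ∀ ξ1 ξ2, 0 ≤ ξ1 → ξ1 ≤ ξ2 → ‖hatg g ξ2‖ ≤ ‖hatg g ξ1‖)
    (hτ0 : 0 < τ0) (hτ0' : τ0 < 1)
    (hα : 0 < α) (hgα : ‖hatg g α‖ = τ0)
    (hσ : ∀ s, 0 < σ s)
    (hsep : ∀ s, ∀ k, 1 ≤ k → k ≤ K →
      2 * α / (deriv (φ k) s - deriv (φ (k - 1)) s) ≤ σ s)
    (hmain : 2 * Msum K A t * (τ0 + lam0 g σ ε1 ε2 t) ≤ muMin K A t)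
    (heps1 : Msum K A t * (τ0 + lam0 g σ ε1 ε2 t) ≤ epst)
    (heps2 : epst ≤ muMin K A t - Msum K A t * (τ0 + lam0 g σ ε1 ε2 t))
    :
    (Gt x g σ t epst = ⋃ k ∈ Finset.range (K + 1), Gtk x g σ φ α t epst k) ∧
    (∀ k ≤ K, ∀ l ≤ K, k ≠ l →
      Disjoint (Gtk x g σ φ α t epst k) (Gtk x g σ φ α t epst l)) ∧
    (∀ k ≤ K, deriv (φ k) t ∈ Gtk x g σ φ α t epst k) :=
  thm2_1a_general K A φ ε1 ε2 x g σ τ0 α t epst hε2 hAreg hφreg hφ0 hApos hφ'pos hfreq hAlip hφ'' hx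
    hgint hgI1 hgI2 hgnorm hgeven hgdec hτ0 hα hgα hσ hsep heps1 heps2
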